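/- Let X ~ Binomial(m, p) with 0 < p < 1, and let k, ℓ be nonnegative integers with k + ℓ ≤ m and k < m. Then Pr(X = k + ℓ) ≤ Pr(X = k) · (mp/(k+1))^ℓ · ((m−k)/(m − mp))^ℓ. -/

import Mathlib

open Real Filter

/-- Probability that a Binomial(m, p) random variable equals `k`. -/
noncomputable def binomProb (m : ℕ) (p : ℝ) (k : ℕ) : ℝ :=
  (m.choose k : ℝ) * p ^ k * (1 - p) ^ (m - k)

/-- For independent `X ~ Binomial(m, p)` and `Y ~ Binomial(n, q)`,
the probability `Pr(Y ≥ X - ℓ)`. -/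
noncomputable def prGEshift (m : ℕ) (p : ℝ) (n : ℕ) (q : ℝ) (ℓ : ℝ) : ℝ :=
  ∑ j ∈ Finset.range (m + 1), ∑ k ∈ Finset.range (n + 1),
    if (j : ℝ) - ℓ ≤ (k : ℝ) then binomProb m p j * binomProb n q k else 0

/-- For independent `X ~ Binomial(m, p)` and `Y ~ Binomial(n, q)`,
the probability `Pr(Y ≥ X)`. -/
noncomputable def prGE (m : ℕ) (p : ℝ) (n : ℕ) (q : ℝ) : ℝ :=
  prGEshift m p n q 0

/-- `P(m, n, p, q) = Pr(Y ≥ X)` for independent `X ~ Binomial(m, max p q)`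
and `Y ~ Binomial(n, min p q)`. -/
noncomputable def Pmn (m n : ℕ) (p q : ℝ) : ℝ :=
  prGE m (max p q) n (min p q)

/-- `P(n, p, q) = P(n, n, p, q)`. -/
noncomputable def Pn (n : ℕ) (p q : ℝ) : ℝ :=
  Pmn n n p q

/-!
The ratio of consecutive binomial probabilities, `(m - j) p / ((j + 1) (1 - p))`, is nonincreasing
in `j`, so from `k` on the probabilities decay at least geometrically with its value at `k` as
common ratio; that value is the product of the two factors in the bound. Beyond `m` the
probabilities vanish, so the decay persists there.
-/

/-- The ratio `binomProb m p (j + 1) / binomProb m p j`. -/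
noncomputable def binomRatio (m : ℕ) (p : ℝ) (j : ℕ) : ℝ :=
  ((m : ℝ) - j) * p / (((j : ℝ) + 1) * (1 - p))

lemma binomProb_nonneg (m : ℕ) {p : ℝ} (hp0 : 0 ≤ p) (hp1 : p ≤ 1) (k : ℕ) :
    0 ≤ binomProb m p k := by
  have := sub_nonneg.2 hp1
  unfold binomProb
  positivity

lemma binomProb_eq_zero_of_lt {m k : ℕ} (h : m < k) (p : ℝ) : binomProb m p k = 0 := by
  simp [binomProb, Nat.choose_eq_zero_of_lt h]

lemma binomProb_succ {m j : ℕ} {p : ℝ} (hp1 : p < 1) (hj : j < m) :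
    binomProb m p (j + 1) = binomRatio m p j * binomProb m p j := by
  have hq : 1 - p ≠ 0 := by linarith
  have hchoose : (m.choose (j + 1) : ℝ) * ((j : ℝ) + 1) = m.choose j * ((m : ℝ) - j) := by
    rw [← Nat.cast_sub hj.le]
    exact_mod_cast Nat.choose_succ_right_eq m j
  have hexp : m - j = m - (j + 1) + 1 := by omega
  unfold binomProb binomRatio
  rw [hexp, pow_succ, pow_succ]
  field_simp
  linear_combination p ^ j * p * hchoose

lemma binomRatio_nonneg {m k : ℕ} {p : ℝ} (hp0 : 0 ≤ p) (hp1 : p ≤ 1) (hkm : k ≤ m) :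
    0 ≤ binomRatio m p k := by
  have hkm' : 0 ≤ (m : ℝ) - k := sub_nonneg.2 (by exact_mod_cast hkm)
  have hq : 0 ≤ 1 - p := sub_nonneg.2 hp1
  unfold binomRatio
  positivity

lemma binomRatio_le_of_le {m j k : ℕ} {p : ℝ} (hp0 : 0 ≤ p) (hp1 : p < 1) (hkj : k ≤ j)
    (hj : j ≤ m) :
    binomRatio m p j ≤ binomRatio m p k := by
  have hq : 0 < 1 - p := by linarith
  have hkj' : (k : ℝ) ≤ j := by exact_mod_cast hkj
  have hjm : (j : ℝ) ≤ m := by exact_mod_cast hj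
  unfold binomRatio
  rw [mul_comm ((j : ℝ) + 1), mul_comm ((k : ℝ) + 1), ← div_div, ← div_div]
  gcongr
  exact div_nonneg (mul_nonneg (by linarith) hp0) hq.le

lemma binomProb_succ_le {m j k : ℕ} {p : ℝ} (hp0 : 0 ≤ p) (hp1 : p < 1) (hkm : k ≤ m)
    (hkj : k ≤ j) :
    binomProb m p (j + 1) ≤ binomRatio m p k * binomProb m p j := by
  rcases lt_or_ge j m with hj | hj
  · rw [binomProb_succ hp1 hj]
    exact mul_le_mul_of_nonneg_right (binomRatio_le_of_le hp0 hp1 hkj hj.le)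
      (binomProb_nonneg m hp0 hp1.le j)
  · rw [binomProb_eq_zero_of_lt (Nat.lt_succ_of_le hj)]
    exact mul_nonneg (binomRatio_nonneg hp0 hp1.le hkm) (binomProb_nonneg m hp0 hp1.le j)

theorem binomial_ratio_bound_general
    (m : ℕ) (p : ℝ) (hp0 : 0 < p) (hp1 : p < 1) (k ℓ : ℕ)
    (hk : k < m) :
    binomProb m p (k + ℓ) ≤
      binomProb m p k * ((m : ℝ) * p / ((k : ℝ) + 1)) ^ ℓ *
        (((m : ℝ) - (k : ℝ)) / ((m : ℝ) - (m : ℝ) * p)) ^ ℓ := by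
  have hm : (m : ℝ) ≠ 0 := Nat.cast_ne_zero.2 (by omega)
  have hq : 1 - p ≠ 0 := by linarith
  have hratio : (m : ℝ) * p / ((k : ℝ) + 1) * (((m : ℝ) - k) / ((m : ℝ) - m * p)) =
      binomRatio m p k := by
    rw [binomRatio, ← mul_one_sub]
    field_simp
  rw [mul_assoc, ← mul_pow, hratio, mul_comm]
  exact le_geom (u := fun i => binomProb m p (k + i)) (binomRatio_nonneg hp0.le hp1.le hk.le) ℓ
    fun i _ => binomProb_succ_le hp0.le hp1 hk.le (Nat.le_add_right k i)

theorem binomial_ratio_bound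
    (m : ℕ) (p : ℝ) (hp0 : 0 < p) (hp1 : p < 1) (k ℓ : ℕ)
    (hkl : k + ℓ ≤ m) (hk : k < m) :
    binomProb m p (k + ℓ) ≤
      binomProb m p k * ((m : ℝ) * p / ((k : ℝ) + 1)) ^ ℓ *
        (((m : ℝ) - (k : ℝ)) / ((m : ℝ) - (m : ℝ) * p)) ^ ℓ :=
  binomial_ratio_bound_general m p hp0 hp1 k ℓ hk
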